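/- arXiv:1602.03394 — 3 statements merged into one kernel-verified Lean document; each statement's English description precedes it below -/
import Mathlib

section
/- Let G be a finite metric graph and let λ > 0. If the subgraph G_λ contains no cycle (i.e., G_λ is a forest), then λ is not a resonance of G; that is, R(G, λ) = {0}. -/
open Real Set Filter Topology

noncomputable section

/-- A finite metric graph: finite vertex and edge sets, each edge `e` has an initial
vertex `o e`, a terminal vertex `t e` and a positive length `L e`, and is identified
with the interval `[0, L e]`.  Every vertex is an endpoint of some edge. -/
structure MetricGraph where
  V : Type
  E : Type
  [fintV : Fintype V]
  [fintE : Fintype E]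
  [decV : DecidableEq V]
  [decE : DecidableEq E]
  o : E → V
  t : E → V
  L : E → ℝ
  L_pos : ∀ e, 0 < L e
  noIsolated : ∀ v, ∃ e, o e = v ∨ t e = v

attribute [instance] MetricGraph.fintV MetricGraph.fintE MetricGraph.decV MetricGraph.decE

namespace MetricGraph

variable (G : MetricGraph)

/-- The source vertex of edge `e` traversed in direction `d`. -/
def esrc (e : G.E) (d : Bool) : G.V := if d then G.o e else G.t e

/-- The destination vertex of edge `e` traversed in direction `d`. -/
def edst (e : G.E) (d : Bool) : G.V := if d then G.t e else G.o e

/-- A cycle in a metric graph: a closed walk which uses no edge twice and repeats no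
vertex except that its initial and terminal vertices coincide. -/
structure Cycle where
  n : ℕ
  npos : 0 < n
  edge : Fin n → G.E
  dir : Fin n → Bool
  edge_inj : Function.Injective edge
  vert_inj : Function.Injective fun i => G.esrc (edge i) (dir i)
  chain : ∀ i : Fin n,
    G.edst (edge i) (dir i) =
      G.esrc (edge ⟨((i : ℕ) + 1) % n, Nat.mod_lt _ npos⟩)
        (dir ⟨((i : ℕ) + 1) % n, Nat.mod_lt _ npos⟩)

/-- The length of a cycle: the sum of the lengths of its edges. -/
def Cycle.length {G : MetricGraph} (c : G.Cycle) : ℝ := ∑ i, G.L (c.edge i)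

/-- The cycle `c` lies in the subgraph given by the edge set `S`. -/
def Cycle.inSub {G : MetricGraph} (c : G.Cycle) (S : Set G.E) : Prop := ∀ i, c.edge i ∈ S

/-- The cycle `c` has odd length with respect to `x`: its length is an odd multiple of `x`. -/
def Cycle.oddLength {G : MetricGraph} (c : G.Cycle) (x : ℝ) : Prop :=
  ∃ m : ℕ, Odd m ∧ c.length = m * x

/-- The initial vertex of a cycle. -/
def Cycle.start {G : MetricGraph} (c : G.Cycle) : G.V :=
  G.esrc (c.edge ⟨0, c.npos⟩) (c.dir ⟨0, c.npos⟩)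

/-- The vertices incident to an edge of the edge set `S`, i.e. the vertex set of the
subgraph generated by `S`. -/
def incVerts (S : Set G.E) : Set G.V := {v | ∃ e ∈ S, G.o e = v ∨ G.t e = v}

/-- Two vertices are related iff they are connected through edges of `S`. -/
def connRel (S : Set G.E) : G.V → G.V → Prop :=
  Relation.EqvGen fun v w => ∃ e ∈ S, G.o e = v ∧ G.t e = w

/-- The connected component of the vertex `v` in the subgraph given by `S`. -/
def component (S : Set G.E) (v : G.V) : Set G.V := {w | G.connRel S v w}

/-- The number of connected components of the subgraph given by the edge set `S`. -/
def beta0 (S : Set G.E) : ℕ := (G.component S '' G.incVerts S).ncard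

/-- The first Betti number `|E| - |V| + β₀` of the subgraph given by the edge set `S`. -/
def beta1 (S : Set G.E) : ℤ :=
  (S.ncard : ℤ) - ((G.incVerts S).ncard : ℤ) + (G.beta0 S : ℤ)

/-- The number of connected components of the subgraph given by `S` which contain a
cycle of odd length with respect to `x`. -/
def beta0odd (S : Set G.E) (x : ℝ) : ℕ :=
  (G.component S '' {v | v ∈ G.incVerts S ∧
    ∃ c : G.Cycle, c.inSub S ∧ c.oddLength x ∧ G.connRel S v c.start}).ncard

/-- The edge set of the subgraph `G_λ`: all edges whose length is a positive integer
multiple of `π / √λ`. -/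
def lamEdges (lam : ℝ) : Set G.E :=
  {e | ∃ k : ℕ, 0 < k ∧ G.L e = k * (π / Real.sqrt lam)}

/-- An edgewise given function is continuous at all the vertices of `G`. -/
def ContVert (f : G.E → ℝ → ℂ) : Prop :=
  (∀ e₁ e₂, G.o e₁ = G.o e₂ → f e₁ 0 = f e₂ 0) ∧
  (∀ e₁ e₂, G.o e₁ = G.t e₂ → f e₁ 0 = f e₂ (G.L e₂)) ∧
  (∀ e₁ e₂, G.t e₁ = G.t e₂ → f e₁ (G.L e₁) = f e₂ (G.L e₂))

/-- The value of an (edgewise given, vertex-continuous) function at the vertex `v`. -/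
def vtxVal (f : G.E → ℝ → ℂ) (v : G.V) : ℂ :=
  if h : ∃ e, G.o e = v then f h.choose 0
  else f (G.noIsolated v).choose (G.L ((G.noIsolated v).choose))

/-- `∂_ν f (v)`: the sum of the derivatives at the vertex `v` of the restrictions of
`f` to the edges incident to `v`, all pointing towards `v`. -/
def normDer (f : G.E → ℝ → ℂ) (v : G.V) : ℂ :=
  (∑ e ∈ Finset.univ.filter fun e => G.t e = v, deriv (f e) (G.L e)) -
    ∑ e ∈ Finset.univ.filter fun e => G.o e = v, deriv (f e) 0

/-- `f` solves `-f'' = μ f` on every edge and is continuous at the vertices.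
(A solution of `-f'' = μ f` on `[0, L e]` is identified with its unique extension to a
global solution on `ℝ`.) -/
def IsSol (mu : ℂ) (f : G.E → ℝ → ℂ) : Prop :=
  (∀ e, ContDiff ℝ 2 (f e)) ∧
  (∀ e, ∀ x : ℝ, deriv (deriv (f e)) x = -mu * f e x) ∧ G.ContVert f

/-- Membership in `ker (-Δ_G - λ)` for the Kirchhoff Laplacian `-Δ_G`. -/
def InKer (lam : ℝ) (f : G.E → ℝ → ℂ) : Prop :=
  G.IsSol (lam : ℂ) f ∧ ∀ v, G.normDer f v = 0

/-- `ker (-Δ_G - λ)` as a set of (edgewise given) functions. -/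
def kerSet (lam : ℝ) : Set (G.E → ℝ → ℂ) := {f | G.InKer lam f}

/-- `λ` is an eigenvalue of the Kirchhoff Laplacian `-Δ_G`. -/
def IsEigenvalue (lam : ℝ) : Prop := G.kerSet lam ≠ {0}

/-- `dim ker (-Δ_G - λ)`. -/
def dimKer (lam : ℝ) : ℕ := Module.finrank ℂ (Submodule.span ℂ (G.kerSet lam))

/-- The resonance eigenspace `R (G, λ)`: all elements of `ker (-Δ_G - λ)` vanishing at
every vertex of `G`. -/
def resSet (lam : ℝ) : Set (G.E → ℝ → ℂ) :=
  {f | G.InKer lam f ∧ ∀ e, f e 0 = 0 ∧ f e (G.L e) = 0}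

/-- `λ` is a (real) resonance of `G` iff `R (G, λ) ≠ {0}`. -/
def IsResonance (lam : ℝ) : Prop := G.resSet lam ≠ {0}

/-- `dim R (G, λ)`. -/
def dimRes (lam : ℝ) : ℕ := Module.finrank ℂ (Submodule.span ℂ (G.resSet lam))

/-- `R_B (G, λ)`: all elements of `ker (-Δ_G - λ)` vanishing at every vertex in `B`. -/
def resSetB (B : Set G.V) (lam : ℝ) : Set (G.E → ℝ → ℂ) :=
  {f | G.InKer lam f ∧ ∀ e, (G.o e ∈ B → f e 0 = 0) ∧ (G.t e ∈ B → f e (G.L e) = 0)}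

/-- `dim R_B (G, λ)`. -/
def dimResB (B : Set G.V) (lam : ℝ) : ℕ :=
  Module.finrank ℂ (Submodule.span ℂ (G.resSetB B lam))

/-- The degree of a vertex (a loop counts twice). -/
def degree (v : G.V) : ℕ := {e | G.o e = v}.ncard + {e | G.t e = v}.ncard

/-- The degree of a vertex inside the subgraph given by the edge set `S`. -/
def degreeIn (S : Set G.E) (v : G.V) : ℕ :=
  {e | e ∈ S ∧ G.o e = v}.ncard + {e | e ∈ S ∧ G.t e = v}.ncard

/-- The edge set of the core of `G`: the largest subgraph without vertices of degree one. -/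
def coreEdges : Set G.E := ⋃₀ {S : Set G.E | ∀ v, G.degreeIn S v ≠ 1}

/-- A boundary vertex is a vertex of degree one. -/
def IsBoundaryVertex (v : G.V) : Prop := G.degree v = 1

/-- A proper core vertex: all edges attached to it belong to the core of `G`. -/
def IsProperCoreVertex (v : G.V) : Prop :=
  ∀ e, G.o e = v ∨ G.t e = v → e ∈ G.coreEdges

/-- The defining property of the function `f^{(l)}` for the Titchmarsh--Weyl matrix:
`f` solves `-f'' = μ f` edgewise, is continuous at the vertices, and satisfies
`∂_ν f (v₀) = 1` and `∂_ν f (v) = 0` for all vertices `v ≠ v₀`. -/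
def IsTWsol (mu : ℂ) (v0 : G.V) (f : G.E → ℝ → ℂ) : Prop :=
  G.IsSol mu f ∧ G.normDer f v0 = 1 ∧ ∀ v, v ≠ v0 → G.normDer f v = 0

open scoped Classical in
/-- The Titchmarsh--Weyl matrix `M_B (μ)` with entries `(M_B (μ))_{k,l} = f^{(l)} (v_k)`
(defined via choice; junk if no `f^{(l)}` exists, i.e. at the eigenvalues). -/
def TW (B : Finset G.V) (mu : ℂ) : Matrix B B ℂ :=
  Matrix.of fun k l : B => if h : ∃ f, G.IsTWsol mu l f then G.vtxVal h.choose k else 0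

/-- The cycle `c` has commensurate edges: all ratios of edge lengths are rational. -/
def Commensurate (c : G.Cycle) : Prop :=
  ∀ i j, ∃ q : ℚ, G.L (c.edge i) = q * G.L (c.edge j)

/-- `u_C`: the maximal number such that the length of each edge of the cycle `c` is a
positive integer multiple of it. -/
def uC (c : G.Cycle) : ℝ :=
  sSup {u : ℝ | 0 < u ∧ ∀ i, ∃ k : ℕ, 0 < k ∧ G.L (c.edge i) = k * u}

/-- `λ_G := inf { π²/u_C² : C a cycle in G with commensurate edges }`, with value `+∞`
if there is no cycle with commensurate edges. -/
def lamThreshold : EReal :=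
  sInf {x : EReal | ∃ c : G.Cycle, G.Commensurate c ∧ x = ((π ^ 2 / (G.uC c) ^ 2 : ℝ) : EReal)}

end MetricGraph

section MatrixFun

variable {m : Type} [Fintype m]

/-- The matrix function `M` has a pole of order `n` at `λ`:
`lim_{z → λ} (z - λ)^n M(z)` exists and is nonzero, while
`lim_{z → λ} (z - λ)^(n+1) M(z) = 0`. -/
def hasPoleOrder (M : ℂ → Matrix m m ℂ) (lam : ℂ) (n : ℕ) : Prop :=
  (∃ A : Matrix m m ℂ, A ≠ 0 ∧
    Filter.Tendsto (fun z => (z - lam) ^ n • M z) (𝓝[≠] lam) (𝓝 A)) ∧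
  Filter.Tendsto (fun z => (z - lam) ^ (n + 1) • M z) (𝓝[≠] lam) (𝓝 0)

/-- `λ` is a pole of the matrix function `M`: `M` is analytic on a punctured
neighborhood of `λ` and has a pole of some order `n ≥ 1` at `λ`. -/
def isPole (M : ℂ → Matrix m m ℂ) (lam : ℂ) : Prop :=
  (∀ᶠ z in 𝓝[≠] lam, ∀ k l, AnalyticAt ℂ (fun w => M w k l) z) ∧
  ∃ n : ℕ, 1 ≤ n ∧ hasPoleOrder M lam n

open scoped Classical in
/-- `Res_λ M := (2πi)⁻¹ ∮_Γ M(μ) dμ`, computed entrywise over a sufficiently small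
positively oriented circle `Γ` centered at `λ` (defined via choice as the common value
of the circle integrals over all sufficiently small radii). -/
def matResidue (M : ℂ → Matrix m m ℂ) (lam : ℂ) : Matrix m m ℂ :=
  Matrix.of fun k l =>
    if h : ∃ c : ℂ, ∀ᶠ R in 𝓝[>] (0 : ℝ),
        (2 * (π : ℂ) * Complex.I)⁻¹ * circleIntegral (fun z => M z k l) lam R = c
    then h.choose else 0

end MatrixFun

/-!
On each edge a function of `R(G, λ)` solves `f'' = -λ f` with `f(0) = f(L) = 0`, so with
`ω = √λ` it is `f'(0) sin(ω x) / ω`. Hence `f'(0) = 0` unless `sin(ω L) = 0`, i.e. unless the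
edge lies in `G_λ`, and then `f'(L) = ± f'(0)`. The Kirchhoff condition therefore forces every
vertex met by a non-loop edge with `f'(0) ≠ 0` to meet a second such edge. A nonempty edge set
with this property contains a cycle (follow a maximal path), and that cycle lies in `G_λ`.
-/

section HarmonicOscillator

variable {ω : ℝ} {f : ℝ → ℂ}

lemma hasDerivAt_ofReal_cos_mul (ω x : ℝ) :
    HasDerivAt (fun y : ℝ => (Real.cos (ω * y) : ℂ)) (-(Real.sin (ω * x) * ω) : ℝ) x := by
  have h := ((Real.hasDerivAt_cos (ω * x)).comp x ((hasDerivAt_id x).const_mul ω)).ofReal_comp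
  exact h.congr_deriv (by push_cast; ring)

lemma hasDerivAt_ofReal_sin_mul (ω x : ℝ) :
    HasDerivAt (fun y : ℝ => (Real.sin (ω * y) : ℂ)) (Real.cos (ω * x) * ω : ℝ) x := by
  have h := ((Real.hasDerivAt_sin (ω * x)).comp x ((hasDerivAt_id x).const_mul ω)).ofReal_comp
  exact h.congr_deriv (by push_cast; ring)

/-- The two Wronskians of `f` with `cos (ω x)` and `sin (ω x)` are conserved. -/
lemma harmonic_conserved (hf : ContDiff ℝ 2 f)
    (hode : ∀ x, deriv (deriv f) x = -(ω : ℂ) ^ 2 * f x) (x : ℝ) :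
    ω * f x * Real.cos (ω * x) - deriv f x * Real.sin (ω * x) = ω * f 0 ∧
      deriv f x * Real.cos (ω * x) + ω * f x * Real.sin (ω * x) = deriv f 0 := by
  have hf' : ∀ y, HasDerivAt f (deriv f y) y :=
    fun y => ((hf.differentiable (by norm_num)) y).hasDerivAt
  have hf'' : ∀ y, HasDerivAt (deriv f) (-(ω : ℂ) ^ 2 * f y) y :=
    fun y => hode y ▸ (hf.differentiable_deriv_two y).hasDerivAt
  have hconst : ∀ g : ℝ → ℂ, (∀ y, HasDerivAt g 0 y) → g x = g 0 := fun g hg =>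
    is_const_of_deriv_eq_zero (fun y => (hg y).differentiableAt) (fun y => (hg y).deriv) x 0
  have hA := hconst (fun y => ω * f y * Real.cos (ω * y) - deriv f y * Real.sin (ω * y)) fun y =>
    ((((hf' y).const_mul (ω : ℂ)).mul (hasDerivAt_ofReal_cos_mul ω y)).sub
      ((hf'' y).mul (hasDerivAt_ofReal_sin_mul ω y))).congr_deriv (by push_cast; ring)
  have hB := hconst (fun y => deriv f y * Real.cos (ω * y) + ω * f y * Real.sin (ω * y)) fun y =>
    (((hf'' y).mul (hasDerivAt_ofReal_cos_mul ω y)).add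
      (((hf' y).const_mul (ω : ℂ)).mul (hasDerivAt_ofReal_sin_mul ω y))).congr_deriv
      (by push_cast; ring)
  simp only [mul_zero, Real.cos_zero, Real.sin_zero, Complex.ofReal_one, Complex.ofReal_zero,
    mul_one, sub_zero, add_zero] at hA hB
  exact ⟨hA, hB⟩

lemma harmonic_of_apply_zero (hf : ContDiff ℝ 2 f)
    (hode : ∀ x, deriv (deriv f) x = -(ω : ℂ) ^ 2 * f x) (hf0 : f 0 = 0) (x : ℝ) :
    ω * f x = deriv f 0 * Real.sin (ω * x) ∧ deriv f x = deriv f 0 * Real.cos (ω * x) := by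
  obtain ⟨hA, hB⟩ := harmonic_conserved hf hode x
  rw [hf0, mul_zero] at hA
  have hpyth : (Real.sin (ω * x) : ℂ) ^ 2 + (Real.cos (ω * x) : ℂ) ^ 2 = 1 := by
    exact_mod_cast Real.sin_sq_add_cos_sq (ω * x)
  constructor
  · linear_combination (Real.cos (ω * x) : ℂ) * hA + (Real.sin (ω * x) : ℂ) * hB
      - (ω : ℂ) * f x * hpyth
  · linear_combination (Real.cos (ω * x) : ℂ) * hB - (Real.sin (ω * x) : ℂ) * hA
      - deriv f x * hpyth

end HarmonicOscillator

namespace MetricGraph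

variable (G : MetricGraph)

lemma incident_iff_esrc_or_edst (e : G.E) (d : Bool) {v : G.V} :
    (G.o e = v ∨ G.t e = v) ↔ (G.esrc e d = v ∨ G.edst e d = v) := by
  cases d <;> simp [esrc, edst, or_comm]

variable {G}

lemma exists_esrc_eq {e : G.E} {v : G.V} (h : G.o e = v ∨ G.t e = v) : ∃ d, G.esrc e d = v :=
  h.elim (fun h => ⟨true, h⟩) (fun h => ⟨false, h⟩)

lemma esrc_ne_edst {e : G.E} (h : G.o e ≠ G.t e) (d : Bool) : G.esrc e d ≠ G.edst e d := by
  cases d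
  exacts [Ne.symm h, h]

lemma exists_cycle_of_loop {S : Set G.E} {e : G.E} (he : e ∈ S) (hloop : G.o e = G.t e) :
    ∃ c : G.Cycle, c.inSub S :=
  ⟨⟨1, one_pos, fun _ => e, fun _ => true, Function.injective_of_subsingleton _,
    Function.injective_of_subsingleton _, fun _ => by simp [esrc, edst, hloop]⟩, fun _ => he⟩

/-- A path without repeated vertices in the subgraph with edge set `S`; only `vtx i` for
`i ≤ len` and `edge i`, `dir i` for `i < len` are meaningful. -/
structure PathIn (S : Set G.E) where
  len : ℕ
  vtx : ℕ → G.V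
  edge : ℕ → G.E
  dir : ℕ → Bool
  vtx_inj : ∀ i j, i ≤ len → j ≤ len → vtx i = vtx j → i = j
  edge_mem : ∀ i < len, edge i ∈ S
  esrc_edge : ∀ i < len, G.esrc (edge i) (dir i) = vtx i
  edst_edge : ∀ i < len, G.edst (edge i) (dir i) = vtx (i + 1)

namespace PathIn

variable {S : Set G.E} (W : G.PathIn S)

lemma incident_iff {i : ℕ} (hi : i < W.len) {v : G.V} :
    (G.o (W.edge i) = v ∨ G.t (W.edge i) = v) ↔ (W.vtx i = v ∨ W.vtx (i + 1) = v) := by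
  rw [G.incident_iff_esrc_or_edst _ (W.dir i), W.esrc_edge i hi, W.edst_edge i hi]

lemma eq_of_edge_eq {i j : ℕ} (hi : i < W.len) (hj : j < W.len) (h : W.edge i = W.edge j) :
    i = j := by
  have hij := (W.incident_iff hj).1 (h ▸ (W.incident_iff hi).2 (Or.inl rfl))
  have hji := (W.incident_iff hi).1 (h ▸ (W.incident_iff hj).2 (Or.inl rfl))
  rcases hij with hij | hij <;> rcases hji with hji | hji <;>
    have := W.vtx_inj _ _ (by omega) (by omega) hij <;>
    have := W.vtx_inj _ _ (by omega) (by omega) hji <;> omega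

lemma succ_eq_len_of_incident_last {i : ℕ} (hi : i < W.len)
    (h : G.o (W.edge i) = W.vtx W.len ∨ G.t (W.edge i) = W.vtx W.len) : i + 1 = W.len := by
  rcases (W.incident_iff hi).1 h with h | h <;> have := W.vtx_inj _ _ (by omega) le_rfl h <;> omega

lemma len_lt_card : W.len < Fintype.card G.V := by
  have hinj : Function.Injective fun i : Fin (W.len + 1) => W.vtx i :=
    fun i j h => Fin.ext (W.vtx_inj _ _ (by omega) (by omega) h)
  simpa using Fintype.card_le_of_injective _ hinj

def ofEdge {e : G.E} (he : e ∈ S) (hloop : G.o e ≠ G.t e) : G.PathIn S where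
  len := 1
  vtx i := if i = 0 then G.o e else G.t e
  edge _ := e
  dir _ := true
  vtx_inj i j hi hj h := by
    interval_cases i <;> interval_cases j <;> simp_all [eq_comm]
  edge_mem _ _ := he
  esrc_edge i hi := by simp [esrc, show i = 0 by omega]
  edst_edge i hi := by simp [edst]

def snoc (e : G.E) (d : Bool) (he : e ∈ S) (hsrc : G.esrc e d = W.vtx W.len)
    (hnew : ∀ j ≤ W.len, W.vtx j ≠ G.edst e d) : G.PathIn S where
  len := W.len + 1
  vtx i := if i ≤ W.len then W.vtx i else G.edst e d
  edge i := if i < W.len then W.edge i else e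
  dir i := if i < W.len then W.dir i else d
  vtx_inj i j hi hj h := by
    by_cases hi' : i ≤ W.len <;> by_cases hj' : j ≤ W.len <;> simp only [hi', hj', if_true,
      if_false] at h
    exacts [W.vtx_inj i j hi' hj' h, (hnew i hi' h).elim, (hnew j hj' h.symm).elim, by omega]
  edge_mem i hi := by
    by_cases h : i < W.len
    · simpa [h] using W.edge_mem i h
    · simpa [h] using he
  esrc_edge i hi := by
    by_cases h : i < W.len
    · simpa [h, h.le] using W.esrc_edge i h
    · simpa [h, show i = W.len by omega] using hsrc
  edst_edge i hi := by
    by_cases h : i < W.len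
    · simpa [h, Nat.succ_le_of_lt h] using W.edst_edge i h
    · simp [show i = W.len by omega]

lemma exists_cycle_of_chord {j : ℕ} (hj : j < W.len) {e : G.E} {d : Bool} (he : e ∈ S)
    (hsrc : G.esrc e d = W.vtx W.len) (hdst : G.edst e d = W.vtx j)
    (hne : ∀ i < W.len, W.edge i ≠ e) : ∃ c : G.Cycle, c.inSub S := by
  set n := W.len - j + 1 with hn
  let edge : Fin n → G.E := fun i => if (i : ℕ) + 1 < n then W.edge (j + i) else e
  let dir : Fin n → Bool := fun i => if (i : ℕ) + 1 < n then W.dir (j + i) else d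
  have hsrc' : ∀ i, G.esrc (edge i) (dir i) = W.vtx (j + i) := by
    intro i
    by_cases h : (i : ℕ) + 1 < n
    · simpa only [edge, dir, if_pos h] using W.esrc_edge _ (by omega)
    · simp only [edge, dir, if_neg h, hsrc]
      congr 1
      omega
  have hdst' : ∀ i : Fin n, G.edst (edge i) (dir i) = W.vtx (j + ((i : ℕ) + 1) % n) := by
    intro i
    by_cases h : (i : ℕ) + 1 < n
    · simp only [edge, dir, if_pos h, Nat.mod_eq_of_lt h, ← add_assoc]
      exact W.edst_edge _ (by omega)
    · simp only [edge, dir, if_neg h, hdst, show (i : ℕ) + 1 = n by omega, Nat.mod_self,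
        add_zero]
  refine ⟨⟨n, by omega, edge, dir, fun a b h => ?_, fun a b h => ?_, fun i => ?_⟩, fun i => ?_⟩
  · by_cases ha : (a : ℕ) + 1 < n <;> by_cases hb : (b : ℕ) + 1 < n <;>
      simp only [edge, ha, hb, if_true, if_false] at h
    · exact Fin.ext (by have := W.eq_of_edge_eq (by omega) (by omega) h; omega)
    · exact (hne _ (by omega) h).elim
    · exact (hne _ (by omega) h.symm).elim
    · exact Fin.ext (by omega)
  · simp only [hsrc'] at h
    exact Fin.ext (by have := W.vtx_inj _ _ (by omega) (by omega) h; omega)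
  · rw [hdst', hsrc']
  · by_cases h : (i : ℕ) + 1 < n
    · simpa only [edge, if_pos h] using W.edge_mem _ (by omega)
    · simpa only [edge, if_neg h] using he

end PathIn

/-- Extending a path at its last vertex by a second edge either closes a cycle or gives a
longer path, and paths have fewer edges than `G` has vertices. -/
lemma PathIn.exists_cycle {S : Set G.E} (hloop : ∀ e ∈ S, G.o e ≠ G.t e)
    (hdeg : ∀ v, ∀ e ∈ S, (G.o e = v ∨ G.t e = v) →
      ∃ e' ∈ S, e' ≠ e ∧ (G.o e' = v ∨ G.t e' = v))
    (W : G.PathIn S) (hW : 0 < W.len) : ∃ c : G.Cycle, c.inSub S := by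
  have hlast : G.o (W.edge (W.len - 1)) = W.vtx W.len ∨ G.t (W.edge (W.len - 1)) = W.vtx W.len :=
    (W.incident_iff (by omega)).2 (Or.inr (by congr 1; omega))
  obtain ⟨e, he, hne, hinc⟩ := hdeg _ _ (W.edge_mem _ (by omega)) hlast
  obtain ⟨d, hd⟩ := exists_esrc_eq hinc
  by_cases hchord : ∃ j ≤ W.len, W.vtx j = G.edst e d
  · obtain ⟨j, hj, hjd⟩ := hchord
    have hjlt : j < W.len := lt_of_le_of_ne hj fun h =>
      esrc_ne_edst (hloop e he) d (hd.trans (h ▸ hjd))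
    refine W.exists_cycle_of_chord hjlt he hd hjd.symm fun i hi hie => hne ?_
    have := W.succ_eq_len_of_incident_last hi (hie ▸ hinc)
    rw [← hie, show i = W.len - 1 by omega]
  · exact PathIn.exists_cycle hloop hdeg (W.snoc e d he hd fun j hj h => hchord ⟨j, hj, h⟩)
      (Nat.succ_pos _)
termination_by Fintype.card G.V - W.len
decreasing_by
  have := (W.snoc e d he hd fun j hj h => hchord ⟨j, hj, h⟩).len_lt_card
  simp only [PathIn.snoc] at this ⊢
  omega

lemma exists_cycle_of_forall_exists_ne_incident {S : Set G.E} (hS : S.Nonempty)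
    (hdeg : ∀ v, ∀ e ∈ S, G.o e ≠ G.t e → (G.o e = v ∨ G.t e = v) →
      ∃ e' ∈ S, e' ≠ e ∧ (G.o e' = v ∨ G.t e' = v)) :
    ∃ c : G.Cycle, c.inSub S := by
  by_cases hloop : ∃ e ∈ S, G.o e = G.t e
  · obtain ⟨e, he, hl⟩ := hloop
    exact exists_cycle_of_loop he hl
  push Not at hloop
  obtain ⟨e, he⟩ := hS
  exact PathIn.exists_cycle hloop (fun v e he => hdeg v e he (hloop e he))
    (PathIn.ofEdge he (hloop e he)) one_pos

lemma exists_ne_incident_of_sum_sub_sum_eq_zero {a c : G.E → ℂ} {v : G.V}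
    (hsum : ∑ e ∈ Finset.univ.filter (fun e => G.t e = v), a e * c e -
      ∑ e ∈ Finset.univ.filter (fun e => G.o e = v), a e = 0)
    {e₀ : G.E} (ha : a e₀ ≠ 0) (hc : c e₀ ≠ 0) (hloop : G.o e₀ ≠ G.t e₀)
    (hinc : G.o e₀ = v ∨ G.t e₀ = v) :
    ∃ e, a e ≠ 0 ∧ e ≠ e₀ ∧ (G.o e = v ∨ G.t e = v) := by
  by_contra! hnone
  have hzero_o : ∀ {e}, e ∈ Finset.univ.filter (fun e => G.o e = v) → e ≠ e₀ → a e = 0 :=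
    fun he hne => by_contra fun ha => (hnone _ ha hne).1 (Finset.mem_filter.1 he).2
  have hzero_t : ∀ {e}, e ∈ Finset.univ.filter (fun e => G.t e = v) → e ≠ e₀ → a e = 0 :=
    fun he hne => by_contra fun ha => (hnone _ ha hne).2 (Finset.mem_filter.1 he).2
  rcases hinc with ho | ht
  · rw [Finset.sum_eq_zero fun e he => by
        rw [hzero_t he (by rintro rfl; exact hloop (ho.trans (Finset.mem_filter.1 he).2.symm)),
          zero_mul],
      Finset.sum_eq_single_of_mem e₀ (by simpa using ho) fun e he => hzero_o he] at hsum
    exact ha (neg_eq_zero.1 (zero_sub (a e₀) ▸ hsum))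
  · rw [Finset.sum_eq_zero fun e he =>
        hzero_o he (by rintro rfl; exact hloop ((Finset.mem_filter.1 he).2.trans ht.symm)),
      Finset.sum_eq_single_of_mem e₀ (by simpa using ht) fun e he hne => by
        rw [hzero_t he hne, zero_mul], sub_zero] at hsum
    exact mul_ne_zero ha hc hsum

lemma mem_lamEdges_of_sin_eq_zero {lam : ℝ} (hlam : 0 < lam) {e : G.E}
    (hs : Real.sin (Real.sqrt lam * G.L e) = 0) : e ∈ G.lamEdges lam := by
  obtain ⟨n, hn⟩ := Real.sin_eq_zero_iff.1 hs
  have hω : 0 < Real.sqrt lam := Real.sqrt_pos.2 hlam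
  have hn0 : 0 < n := by
    by_contra! h
    have : (n : ℝ) ≤ 0 := by exact_mod_cast h
    nlinarith [Real.pi_pos, mul_pos hω (G.L_pos e)]
  refine ⟨n.toNat, by omega, ?_⟩
  rw [show (n.toNat : ℝ) = n by exact_mod_cast Int.toNat_of_nonneg hn0.le]
  field_simp
  linear_combination -hn

lemma zero_mem_resSet (lam : ℝ) : (0 : G.E → ℝ → ℂ) ∈ G.resSet lam := by
  have hd0 : deriv (0 : ℝ → ℂ) = 0 := funext fun y => deriv_const y 0
  refine ⟨⟨⟨fun _ => contDiff_const, fun _ _ => by simp [hd0], fun _ _ _ => rfl,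
    fun _ _ _ => rfl, fun _ _ _ => rfl⟩, fun _ => by simp [normDer, hd0]⟩, fun _ => ⟨rfl, rfl⟩⟩

lemma eq_zero_of_mem_resSet {lam : ℝ} (hlam : 0 < lam)
    (hforest : ¬ ∃ c : G.Cycle, c.inSub (G.lamEdges lam)) {f : G.E → ℝ → ℂ}
    (hf : f ∈ G.resSet lam) : f = 0 := by
  obtain ⟨⟨⟨hsmooth, hode, -⟩, hkirchhoff⟩, hvanish⟩ := hf
  set ω := Real.sqrt lam
  have hform : ∀ e x, ω * f e x = deriv (f e) 0 * Real.sin (ω * x) ∧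
      deriv (f e) x = deriv (f e) 0 * Real.cos (ω * x) := by
    refine fun e => harmonic_of_apply_zero (hsmooth e) (fun x => ?_) (hvanish e).1
    rw [hode e x, ← Complex.ofReal_pow, Real.sq_sqrt hlam.le]
  have hsin : ∀ e, deriv (f e) 0 ≠ 0 → Real.sin (ω * G.L e) = 0 := by
    intro e he
    have h := (hform e (G.L e)).1
    rw [(hvanish e).2, mul_zero, eq_comm, mul_eq_zero] at h
    exact_mod_cast h.resolve_left he
  have hcos : ∀ e, deriv (f e) 0 ≠ 0 → (Real.cos (ω * G.L e) : ℂ) ≠ 0 := by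
    intro e he h
    nlinarith [Real.sin_sq_add_cos_sq (ω * G.L e), hsin e he, Complex.ofReal_eq_zero.1 h]
  have hderiv_zero : ∀ e, deriv (f e) 0 = 0 := by
    by_contra! ⟨e₀, he₀⟩
    obtain ⟨c, hc⟩ := exists_cycle_of_forall_exists_ne_incident (S := {e | deriv (f e) 0 ≠ 0})
      ⟨e₀, he₀⟩ fun v e he hloop hinc => by
        refine exists_ne_incident_of_sum_sub_sum_eq_zero (c := fun e => (Real.cos (ω * G.L e) : ℂ))
          ?_ he (hcos e he) hloop hinc
        simpa only [normDer, fun e => (hform e (G.L e)).2] using hkirchhoff v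
    exact hforest ⟨c, fun i => G.mem_lamEdges_of_sin_eq_zero hlam (hsin _ (hc i))⟩
  funext e x
  have h := (hform e x).1
  rw [hderiv_zero e, zero_mul, mul_eq_zero] at h
  exact h.resolve_left (by exact_mod_cast (Real.sqrt_pos.2 hlam).ne')

end MetricGraph

/-- if the subgraph `G_λ` contains no cycle, then `λ` is not a
resonance of `G`, i.e. `R(G, λ) = {0}`. -/
theorem statement_9 (G : MetricGraph) (lam : ℝ) (hlam : 0 < lam)
    (hforest : ¬ ∃ c : G.Cycle, c.inSub (G.lamEdges lam)) :
    G.resSet lam = {0} ∧ ¬ G.IsResonance lam := by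
  have hres : G.resSet lam = {0} := Set.eq_singleton_iff_unique_mem.2
    ⟨G.zero_mem_resSet lam, fun _ hf => G.eq_zero_of_mem_resSet hlam hforest hf⟩
  exact ⟨hres, fun h => h hres⟩
end
end

section
/- Let G be a finite metric graph and let B be a set of vertices of G containing all boundary vertices and all proper core vertices of G. Let λ ∈ ℝ and let f ∈ ker(−Δ_G − λ) satisfy f(v) = 0 for every v ∈ B. Then f(v) = 0 for every vertex v of G. -/
open Real Set Filter Topology

noncomputable section

/-! The edges on which `f` does not vanish identically span a subgraph without vertices of
degree one, so they lie in the core. Indeed, if `v` were the vertex of exactly one end `p` of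
such an edge, then `f (v) = 0`: either `v ∈ B`, or `v` is not a boundary vertex, so some other end
at `v` belongs to an edge on which `f ≡ 0`. The Kirchhoff condition at `v` then reduces to
`f' = 0` at `p`, and uniqueness for `-f'' = λ f` forces `f ≡ 0` on the edge of `p`.
Finally, a vertex outside `B` is not a proper core vertex, so it is incident to a non-core edge,
on which `f ≡ 0`. -/

theorem eq_zero_of_deriv_deriv_eq_clm_apply {E : Type*} [NormedAddCommGroup E]
    [NormedSpace ℝ E] (A : E →L[ℝ] E) {f : ℝ → E} (hf : ContDiff ℝ 2 f)
    (hode : ∀ x, deriv (deriv f) x = A (f x)) {x₀ : ℝ}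
    (h₀ : f x₀ = 0) (h₁ : deriv f x₀ = 0) : f = 0 := by
  set V : E × E →L[ℝ] E × E := (ContinuousLinearMap.snd ℝ E E).prod (A.comp (.fst ℝ E E))
  have hdf : Differentiable ℝ f := hf.differentiable (by norm_num)
  have hdf' : Differentiable ℝ (deriv f) :=
    (contDiff_succ_iff_deriv (n := 1).mp hf).2.2.differentiable one_ne_zero
  have hsol : (fun x => (f x, deriv f x)) = 0 :=
    ODE_solution_unique_univ (v := fun _ => V) (s := fun _ => univ) (t₀ := x₀)
      (fun _ => V.lipschitz.lipschitzOnWith)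
      (fun x => ⟨by simpa [V, hode x] using (hdf x).hasDerivAt.prodMk (hdf' x).hasDerivAt,
        trivial⟩)
      (fun x => ⟨by simp, trivial⟩)
      (by simp [h₀, h₁])
  funext x
  exact congrArg Prod.fst (congrFun hsol x)

namespace MetricGraph

variable {G : MetricGraph}

/-- The end `(e, true)` of an edge sits at `o e` and position `0`, the end `(e, false)` at `t e`
and position `L e`. -/
def endVertex (p : G.E × Bool) : G.V := G.esrc p.1 p.2

def endPos (p : G.E × Bool) : ℝ := if p.2 then 0 else G.L p.1

theorem ContVert.apply_endPos_eq {f : G.E → ℝ → ℂ} (hf : G.ContVert f) {p q : G.E × Bool}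
    (h : G.endVertex p = G.endVertex q) : f p.1 (G.endPos p) = f q.1 (G.endPos q) := by
  obtain ⟨hoo, hot, htt⟩ := hf
  obtain ⟨e, _ | _⟩ := p <;> obtain ⟨e', _ | _⟩ := q <;>
    simp only [endVertex, endPos, esrc, Bool.false_eq_true, if_true, if_false] at h ⊢
  exacts [htt e e' h, (hot e' e h.symm).symm, hot e e' h, hoo e e' h]

theorem degreeIn_eq_ncard_ends (S : Set G.E) (v : G.V) :
    G.degreeIn S v = {p : G.E × Bool | p.1 ∈ S ∧ G.endVertex p = v}.ncard := by
  have hsplit : {p : G.E × Bool | p.1 ∈ S ∧ G.endVertex p = v} =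
      (·, true) '' {e | e ∈ S ∧ G.o e = v} ∪ (·, false) '' {e | e ∈ S ∧ G.t e = v} := by
    ext ⟨e, _ | _⟩ <;> simp [endVertex, esrc]
  rw [hsplit, Set.ncard_union_eq (by simp [Set.disjoint_left]),
    Set.ncard_image_of_injective _ (Prod.mk_left_injective true),
    Set.ncard_image_of_injective _ (Prod.mk_left_injective false), degreeIn]

theorem degree_eq_ncard_ends (v : G.V) :
    G.degree v = {p : G.E × Bool | G.endVertex p = v}.ncard := by
  simpa [degreeIn, degree] using degreeIn_eq_ncard_ends Set.univ v

theorem normDer_eq_sum_ends (f : G.E → ℝ → ℂ) (v : G.V) :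
    G.normDer f v = ∑ p ∈ Finset.univ.filter (fun p : G.E × Bool => G.endVertex p = v),
      (if p.2 then -1 else 1) * deriv (f p.1) (G.endPos p) := by
  rw [Finset.sum_filter, Fintype.sum_prod_type, normDer, Finset.sum_filter, Finset.sum_filter,
    sub_eq_add_neg, ← Finset.sum_neg_distrib, ← Finset.sum_add_distrib]
  refine Finset.sum_congr rfl fun e _ => ?_
  simp [endVertex, endPos, esrc, add_comm, neg_ite]

theorem exists_end_ne_of_not_isBoundaryVertex {v : G.V} (hv : ¬ G.IsBoundaryVertex v)
    {p : G.E × Bool} (hp : G.endVertex p = v) : ∃ q, G.endVertex q = v ∧ q ≠ p := by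
  rw [IsBoundaryVertex, degree_eq_ncard_ends] at hv
  have hpos : 0 < {q : G.E × Bool | G.endVertex q = v}.ncard := (Set.ncard_pos).mpr ⟨p, hp⟩
  exact Set.exists_ne_of_one_lt_ncard (lt_of_le_of_ne hpos (Ne.symm hv)) p

theorem exists_end_notMem_coreEdges_of_not_isProperCoreVertex {v : G.V}
    (hv : ¬ G.IsProperCoreVertex v) : ∃ q : G.E × Bool, G.endVertex q = v ∧ q.1 ∉ G.coreEdges := by
  simp only [IsProperCoreVertex, not_forall, exists_prop] at hv
  obtain ⟨e, ho | ht, he⟩ := hv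
  exacts [⟨(e, true), ho, he⟩, ⟨(e, false), ht, he⟩]

theorem deriv_endPos_eq_zero_of_normDer_eq_zero {f : G.E → ℝ → ℂ} {v : G.V}
    (hv : G.normDer f v = 0) {p : G.E × Bool} (hp : G.endVertex p = v)
    (hothers : ∀ q, G.endVertex q = v → q ≠ p → f q.1 = 0) :
    deriv (f p.1) (G.endPos p) = 0 := by
  rw [normDer_eq_sum_ends, Finset.sum_eq_single p (fun q hq hqp => by
      simp [hothers q (Finset.mem_filter.mp hq).2 hqp])
    (fun h => absurd (Finset.mem_filter.mpr ⟨Finset.mem_univ p, hp⟩) h)] at hv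
  exact (mul_eq_zero.mp hv).resolve_left (by split_ifs <;> norm_num)

theorem setOf_ne_zero_subset_coreEdges {B : Set G.V} (hbd : ∀ v, G.IsBoundaryVertex v → v ∈ B)
    {lam : ℝ} {f : G.E → ℝ → ℂ} (hf : G.InKer lam f)
    (hB : ∀ p, G.endVertex p ∈ B → f p.1 (G.endPos p) = 0) :
    {e | f e ≠ 0} ⊆ G.coreEdges := by
  obtain ⟨⟨hsmooth, hode, hcont⟩, hkirch⟩ := hf
  refine Set.subset_sUnion_of_mem fun v hv => ?_
  rw [degreeIn_eq_ncard_ends, Set.ncard_eq_one] at hv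
  obtain ⟨p, hp⟩ := hv
  have hpS : p ∈ {q : G.E × Bool | q.1 ∈ {e | f e ≠ 0} ∧ G.endVertex q = v} :=
    hp ▸ Set.mem_singleton p
  obtain ⟨hpf, hpv⟩ := hpS
  have hothers : ∀ q, G.endVertex q = v → q ≠ p → f q.1 = 0 := fun q hq hqp =>
    not_not.mp fun hqf => hqp (hp ▸ ⟨hqf, hq⟩ : q ∈ ({p} : Set _))
  have hval : f p.1 (G.endPos p) = 0 := by
    by_cases hvB : v ∈ B
    · exact hB p (hpv ▸ hvB)
    obtain ⟨q, hq, hqp⟩ := exists_end_ne_of_not_isBoundaryVertex (fun h => hvB (hbd v h)) hpv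
    rw [hcont.apply_endPos_eq (hpv.trans hq.symm), hothers q hq hqp, Pi.zero_apply]
  have hder := deriv_endPos_eq_zero_of_normDer_eq_zero (hkirch v) hpv hothers
  exact hpf (eq_zero_of_deriv_deriv_eq_clm_apply (ContinuousLinearMap.lsmul ℝ ℂ (-lam : ℂ))
    (hsmooth p.1) (by simpa using hode p.1) hval hder)

end MetricGraph

/-- Lemma `lem:billig`: if `B` contains all boundary vertices and
all proper core vertices of `G`, `λ ∈ ℝ`, and `f ∈ ker(-Δ_G - λ)` vanishes at every
vertex in `B`, then `f` vanishes at every vertex of `G`. -/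
theorem statement_12 (G : MetricGraph) (B : Set G.V)
    (hbd : ∀ v, G.IsBoundaryVertex v → v ∈ B)
    (hcore : ∀ v, G.IsProperCoreVertex v → v ∈ B)
    (lam : ℝ) (f : G.E → ℝ → ℂ) (hf : f ∈ G.kerSet lam)
    (hzero : ∀ e, (G.o e ∈ B → f e 0 = 0) ∧ (G.t e ∈ B → f e (G.L e) = 0)) :
    ∀ e, f e 0 = 0 ∧ f e (G.L e) = 0 := by
  have hB : ∀ p, G.endVertex p ∈ B → f p.1 (G.endPos p) = 0 := by
    rintro ⟨e, _ | _⟩ h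
    exacts [(hzero e).2 h, (hzero e).1 h]
  have hcoreEdges := G.setOf_ne_zero_subset_coreEdges hbd hf hB
  have hends : ∀ p, f p.1 (G.endPos p) = 0 := by
    intro p
    by_cases hp : G.endVertex p ∈ B
    · exact hB p hp
    obtain ⟨q, hq, hqcore⟩ :=
      MetricGraph.exists_end_notMem_coreEdges_of_not_isProperCoreVertex fun h => hp (hcore _ h)
    have hqf : f q.1 = 0 := not_not.mp fun h => hqcore (hcoreEdges h)
    rw [hf.1.2.2.apply_endPos_eq hq.symm, hqf, Pi.zero_apply]
  exact fun e => ⟨hends (e, true), hends (e, false)⟩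
end
end

section
/- Let G be the finite metric graph with eight vertices v₀, a, a′, b, b′, r, l, p and thirteen edges: six edges of length 1, namely v₀–a, v₀–a′, a–a′, v₀–b, v₀–b′, b–b′ (two triangles of side 1 sharing the vertex v₀); six edges of length √3, namely a–b, a–r, b–r, a′–b′, a′–l, b′–l (two triangles of side √3); and one edge r–p of length π/2. Then: (i) dim R(G, π²/3) = 0, so π²/3 is not a resonance of G; (ii) dim R(G, 4) = 0, so 4 is not a resonance of G; (iii) dim R(G, π²) = 1, so π² is a resonance of G; and (iv) dim R(G, 4π²/3) = 2, so 4π²/3 is a resonance of G. -/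
open Real Set Filter Topology

noncomputable section

/-- The metric graph of Example `ex:example2` (Figure `fig:Hantel1`): vertices
`v₀ = 0`, `a = 1`, `a′ = 2`, `b = 3`, `b′ = 4`, `r = 5`, `l = 6`, `p = 7`; six (dashed)
edges of length `1` forming the two triangles `v₀ a a′` and `v₀ b b′`, six edges of
length `√3` forming the two triangles `a b r` and `a′ b′ l`, and one (dotted) edge
`r–p` of length `π/2`. -/
def exampleGraph : MetricGraph where
  V := Fin 8
  E := Fin 13
  o := ![0, 0, 1, 0, 0, 3, 1, 1, 3, 2, 2, 4, 5]
  t := ![1, 2, 2, 3, 4, 4, 3, 5, 5, 4, 6, 6, 7]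
  L := fun e => if (e : ℕ) < 6 then 1 else if (e : ℕ) < 12 then Real.sqrt 3 else π / 2
  L_pos := by
    intro e
    split_ifs <;> positivity
  noIsolated := by
    intro v
    fin_cases v
    · exact ⟨0, Or.inl rfl⟩
    · exact ⟨0, Or.inr rfl⟩
    · exact ⟨1, Or.inr rfl⟩
    · exact ⟨3, Or.inr rfl⟩
    · exact ⟨4, Or.inr rfl⟩
    · exact ⟨7, Or.inr rfl⟩
    · exact ⟨10, Or.inr rfl⟩
    · exact ⟨12, Or.inr rfl⟩

/-! On an edge, an element of `R(G, ω²)` solves `f'' = -ω² f` and vanishes at `0`, so it is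
`a_e sin (ω x)`; vanishing at the far end says `a_e sin (ω L_e) = 0`, and the Kirchhoff
condition at `v` becomes `∑_{t e = v} a_e cos (ω L_e) = ∑_{o e = v} a_e`. Hence `R(G, ω²)` is
isomorphic to the solution space of this finite linear system in the coefficients `a`.

For the example graph, an edge carries a nonzero coefficient only if its length is a multiple
of `π / ω`. At `ω = π / √3` only the two `√3`-triangles survive, with `cos (ω √3) = -1`, and
the Kirchhoff conditions around an odd cycle then force zero. At `ω = 2` only the edge `r–p`
survives, and it is killed at its free end `p`. At `ω = π` the two unit triangles survive with
`cos ω = -1`, and the conditions at `v₀, a, a', b, b'` leave one free parameter. At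
`ω = 2π / √3` the two `√3`-triangles survive with `cos (ω √3) = 1`, each carrying its own
solution. -/

-- `W` and `Z` are first integrals of `f'' = -ω² f`, and `ω f = W cos (ω x) + Z sin (ω x)`.
theorem mul_eq_cos_add_sin_of_deriv_deriv_eq {f : ℝ → ℂ} {ω : ℝ} (hf : ContDiff ℝ 2 f)
    (hf'' : ∀ x, deriv (deriv f) x = -(ω : ℂ) ^ 2 * f x) (x : ℝ) :
    (ω : ℂ) * f x = ω * f 0 * Real.cos (ω * x) + deriv f 0 * Real.sin (ω * x) := by
  have hcos (y : ℝ) :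
      HasDerivAt (fun y : ℝ => (Real.cos (ω * y) : ℂ)) (-(Real.sin (ω * y) * ω)) y := by
    simpa using ((Real.hasDerivAt_cos _).comp y ((hasDerivAt_id y).const_mul ω)).ofReal_comp
  have hsin (y : ℝ) :
      HasDerivAt (fun y : ℝ => (Real.sin (ω * y) : ℂ)) (Real.cos (ω * y) * ω) y := by
    simpa using ((Real.hasDerivAt_sin _).comp y ((hasDerivAt_id y).const_mul ω)).ofReal_comp
  have hf' (y : ℝ) : HasDerivAt f (deriv f y) y := (hf.differentiable two_ne_zero y).hasDerivAt
  have hf'' (y : ℝ) : HasDerivAt (deriv f) (-(ω : ℂ) ^ 2 * f y) y := by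
    rw [← hf'']
    exact ((hf.iterate_deriv' 1 1).differentiable one_ne_zero y).hasDerivAt
  set W : ℝ → ℂ := fun y => ω * f y * Real.cos (ω * y) - deriv f y * Real.sin (ω * y)
  set Z : ℝ → ℂ := fun y => ω * f y * Real.sin (ω * y) + deriv f y * Real.cos (ω * y)
  have hW (y : ℝ) : HasDerivAt W 0 y := by
    refine ((((hf' y).const_mul (ω : ℂ)).mul (hcos y)).sub
      ((hf'' y).mul (hsin y))).congr_deriv ?_
    ring
  have hZ (y : ℝ) : HasDerivAt Z 0 y := by
    refine ((((hf' y).const_mul (ω : ℂ)).mul (hsin y)).add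
      ((hf'' y).mul (hcos y))).congr_deriv ?_
    ring
  have hWx : W x = W 0 :=
    is_const_of_deriv_eq_zero (fun y => (hW y).differentiableAt) (fun y => (hW y).deriv) x 0
  have hZx : Z x = Z 0 :=
    is_const_of_deriv_eq_zero (fun y => (hZ y).differentiableAt) (fun y => (hZ y).deriv) x 0
  have hpyth : (Real.sin (ω * x) : ℂ) ^ 2 + (Real.cos (ω * x) : ℂ) ^ 2 = 1 := by
    exact_mod_cast Real.sin_sq_add_cos_sq (ω * x)
  simp only [W, Z, mul_zero, Real.cos_zero, Real.sin_zero, Complex.ofReal_one,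
    Complex.ofReal_zero] at hWx hZx
  linear_combination
    (Real.cos (ω * x) : ℂ) * hWx + (Real.sin (ω * x) : ℂ) * hZx - ω * f x * hpyth

theorem sin_ne_zero_of_mul_pi_lt_of_lt_add_one_mul_pi {x : ℝ} (n : ℤ) (h₁ : n * π < x)
    (h₂ : x < (n + 1) * π) : Real.sin x ≠ 0 := by
  refine Real.sin_ne_zero_iff.2 fun m hm => ?_
  subst hm
  have hn : (n : ℝ) < m := lt_of_mul_lt_mul_right h₁ Real.pi_pos.le
  have hm : (m : ℝ) < n + 1 := lt_of_mul_lt_mul_right h₂ Real.pi_pos.le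
  norm_cast at hn hm
  omega

def sineFamily (ι : Type*) (ω : ℝ) : (ι → ℂ) →ₗ[ℂ] (ι → ℝ → ℂ) where
  toFun a i x := a i * Real.sin (ω * x)
  map_add' a b := by ext; simp [add_mul]
  map_smul' c a := by ext; simp [mul_assoc]

section SineFamily

variable {ι : Type*}

theorem sineFamily_apply (ω : ℝ) (a : ι → ℂ) (i : ι) (x : ℝ) :
    sineFamily ι ω a i x = a i * Real.sin (ω * x) := rfl

theorem sineFamily_injective {ω : ℝ} (hω : ω ≠ 0) :
    Function.Injective (sineFamily ι ω) := by
  refine (injective_iff_map_eq_zero _).2 fun a ha => funext fun i => ?_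
  have := congrFun (congrFun ha i) (π / 2 / ω)
  rwa [sineFamily_apply, mul_div_cancel₀ _ hω, Real.sin_pi_div_two, Complex.ofReal_one,
    mul_one] at this

theorem hasDerivAt_sineFamily (ω : ℝ) (a : ι → ℂ) (i : ι) (x : ℝ) :
    HasDerivAt (sineFamily ι ω a i) (a i * (ω * Real.cos (ω * x))) x :=
  ((((Real.hasDerivAt_sin _).comp x ((hasDerivAt_id x).const_mul ω)).ofReal_comp).const_mul
    (a i)).congr_deriv (by simp only [id]; push_cast; ring)

theorem deriv_deriv_sineFamily (ω : ℝ) (a : ι → ℂ) (i : ι) (x : ℝ) :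
    deriv (deriv (sineFamily ι ω a i)) x = -(ω : ℂ) ^ 2 * sineFamily ι ω a i x := by
  have hcos : HasDerivAt (fun y : ℝ => a i * (ω * Real.cos (ω * y)))
      (a i * (ω * -(ω * Real.sin (ω * x)))) x := by
    simpa [mul_comm] using ((((Real.hasDerivAt_cos _).comp x
      ((hasDerivAt_id x).const_mul ω)).ofReal_comp).const_mul (ω : ℂ)).const_mul (a i)
  rw [funext fun y => (hasDerivAt_sineFamily ω a i y).deriv, hcos.deriv, sineFamily_apply]
  push_cast
  ring

end SineFamily

namespace MetricGraph

variable (G : MetricGraph)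

/-- `ω⁻¹ ∂_ν f (v)` for `f = sineFamily G.E ω a`. -/
def sineKirchhoff (ω : ℝ) (a : G.E → ℂ) (v : G.V) : ℂ :=
  (∑ e ∈ Finset.univ.filter fun e => G.t e = v, a e * Real.cos (ω * G.L e)) -
    ∑ e ∈ Finset.univ.filter fun e => G.o e = v, a e

def resCoeffs (ω : ℝ) : Submodule ℂ (G.E → ℂ) where
  carrier := {a | (∀ e, a e * Real.sin (ω * G.L e) = 0) ∧ ∀ v, G.sineKirchhoff ω a v = 0}
  zero_mem' := by simp [sineKirchhoff]
  add_mem' := by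
    rintro a b ⟨ha, ha'⟩ ⟨hb, hb'⟩
    refine ⟨fun e => ?_, fun v => ?_⟩
    · rw [Pi.add_apply, add_mul, ha e, hb e, add_zero]
    · have := congrArg₂ (· + ·) (ha' v) (hb' v)
      simp only [sineKirchhoff, Pi.add_apply, add_mul, Finset.sum_add_distrib] at this ⊢
      linear_combination this
  smul_mem' := by
    rintro c a ⟨ha, ha'⟩
    refine ⟨fun e => ?_, fun v => ?_⟩
    · rw [Pi.smul_apply, smul_eq_mul, mul_assoc, ha e, mul_zero]
    · simp only [sineKirchhoff, Pi.smul_apply, smul_eq_mul, mul_assoc, ← Finset.mul_sum,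
        ← mul_sub]
      exact mul_eq_zero_of_right c (ha' v)

variable {G}

theorem coeff_eq_zero_of_mem_resCoeffs {ω : ℝ} {a : G.E → ℂ} (ha : a ∈ G.resCoeffs ω)
    {e : G.E} (he : Real.sin (ω * G.L e) ≠ 0) : a e = 0 :=
  (mul_eq_zero.1 (ha.1 e)).resolve_right (by exact_mod_cast he)

theorem normDer_sineFamily (ω : ℝ) (a : G.E → ℂ) (v : G.V) :
    G.normDer (sineFamily G.E ω a) v = ω * G.sineKirchhoff ω a v := by
  simp only [normDer, sineKirchhoff, fun e x => (hasDerivAt_sineFamily ω a e x).deriv, mul_sub,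
    Finset.mul_sum, mul_zero, Real.cos_zero, Complex.ofReal_one]
  congr 1 <;> exact Finset.sum_congr rfl fun e _ => by ring

theorem sineFamily_mem_resSet {ω : ℝ} {a : G.E → ℂ} (ha : a ∈ G.resCoeffs ω) :
    sineFamily G.E ω a ∈ G.resSet (ω ^ 2) := by
  have hvert (e : G.E) : sineFamily G.E ω a e 0 = 0 ∧ sineFamily G.E ω a e (G.L e) = 0 :=
    ⟨by simp [sineFamily_apply], ha.1 e⟩
  refine ⟨⟨⟨fun e => ?_, fun e x => ?_, ?_⟩, fun v => ?_⟩, hvert⟩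
  · exact contDiff_const.mul (Complex.ofRealCLM.contDiff.comp
      (Real.contDiff_sin.comp (contDiff_const.mul contDiff_id)))
  · rw [deriv_deriv_sineFamily]
    push_cast
    ring
  · exact ⟨fun e₁ e₂ _ => by rw [(hvert e₁).1, (hvert e₂).1],
      fun e₁ e₂ _ => by rw [(hvert e₁).1, (hvert e₂).2],
      fun e₁ e₂ _ => by rw [(hvert e₁).2, (hvert e₂).2]⟩
  · rw [normDer_sineFamily, ha.2 v, mul_zero]

theorem eq_sineFamily_of_mem_resSet {ω : ℝ} (hω : ω ≠ 0) {f : G.E → ℝ → ℂ}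
    (hf : f ∈ G.resSet (ω ^ 2)) : f = sineFamily G.E ω (fun e => deriv (f e) 0 / ω) := by
  obtain ⟨⟨⟨hsmooth, hode, -⟩, -⟩, hvert⟩ := hf
  funext e x
  have := mul_eq_cos_add_sin_of_deriv_deriv_eq (hsmooth e) (fun y => by simpa using hode e y) x
  rw [(hvert e).1] at this
  rw [sineFamily_apply, div_mul_eq_mul_div, eq_div_iff (by exact_mod_cast hω)]
  linear_combination this

theorem resSet_sq_eq_image {ω : ℝ} (hω : ω ≠ 0) :
    G.resSet (ω ^ 2) = sineFamily G.E ω '' G.resCoeffs ω := by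
  refine Set.Subset.antisymm (fun f hf => ⟨_, ⟨fun e => ?_, fun v => ?_⟩,
    (eq_sineFamily_of_mem_resSet hω hf).symm⟩)
    (Set.image_subset_iff.2 fun a ha => sineFamily_mem_resSet ha)
  · have := (hf.2 e).2
    rwa [eq_sineFamily_of_mem_resSet hω hf, sineFamily_apply] at this
  · have := hf.1.2 v
    rw [eq_sineFamily_of_mem_resSet hω hf, normDer_sineFamily] at this
    exact (mul_eq_zero.1 this).resolve_left (by exact_mod_cast hω)

theorem dimRes_sq {ω : ℝ} (hω : ω ≠ 0) :
    G.dimRes (ω ^ 2) = Module.finrank ℂ (G.resCoeffs ω) := by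
  rw [dimRes, resSet_sq_eq_image hω, Submodule.span_image, Submodule.span_eq]
  exact (Submodule.equivMapOfInjective _ (sineFamily_injective hω) _).finrank_eq.symm

theorem isResonance_sq_iff {ω : ℝ} (hω : ω ≠ 0) :
    G.IsResonance (ω ^ 2) ↔ G.resCoeffs ω ≠ ⊥ := by
  rw [IsResonance, resSet_sq_eq_image hω, ← Submodule.map_coe, ← Submodule.bot_coe (R := ℂ),
    Ne, Ne, SetLike.coe_set_eq, ← Submodule.map_bot (sineFamily G.E ω),
    (Submodule.map_injective_of_injective (sineFamily_injective hω)).eq_iff]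

theorem isResonance_sq_iff_dimRes_pos {ω : ℝ} (hω : ω ≠ 0) :
    G.IsResonance (ω ^ 2) ↔ 0 < G.dimRes (ω ^ 2) := by
  rw [isResonance_sq_iff hω, dimRes_sq hω, pos_iff_ne_zero, Ne, Ne, Submodule.finrank_eq_zero]

end MetricGraph

open MetricGraph

theorem one_lt_sqrt_three : 1 < √3 := by
  rw [Real.lt_sqrt zero_le_one]
  norm_num

theorem sqrt_three_lt_two : √3 < 2 := by
  rw [Real.sqrt_lt' two_pos]
  norm_num

theorem pi_lt_two_mul_sqrt_three : π < 2 * √3 := by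
  have : (1.7 : ℝ) < √3 := by
    rw [Real.lt_sqrt (by norm_num)]
    norm_num
  linarith [Real.pi_lt_d2]

-- Coefficient vectors are written as `Fin 13 → ℂ`, to which `exampleGraph.E → ℂ` unfolds but
-- which it does not match syntactically (numerals, instances): hence the `erw` here and the
-- explicit `M := exampleGraph.E → ℂ` below. The rows are the vertices `v₀, a, a', b, b', r, l, p`.
theorem exampleGraph_sineKirchhoff (ω : ℝ) (a : Fin 13 → ℂ) :
    exampleGraph.sineKirchhoff ω a = ![
      -(a 0 + a 1 + a 3 + a 4),
      a 0 * Real.cos ω - (a 2 + a 6 + a 7),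
      (a 1 + a 2) * Real.cos ω - (a 9 + a 10),
      a 3 * Real.cos ω + a 6 * Real.cos (ω * √3) - (a 5 + a 8),
      (a 4 + a 5) * Real.cos ω + a 9 * Real.cos (ω * √3) - a 11,
      (a 7 + a 8) * Real.cos (ω * √3) - a 12,
      (a 10 + a 11) * Real.cos (ω * √3),
      a 12 * Real.cos (ω * (π / 2))] := by
  have hsum (f : exampleGraph.E → ℂ) : ∑ e, f e = ∑ i : Fin 13, f i := rfl
  funext v
  simp only [sineKirchhoff]
  erw [Finset.sum_filter, Finset.sum_filter]
  simp only [hsum, Fin.sum_univ_succ, Fin.sum_univ_zero]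
  fin_cases v <;> simp [exampleGraph] <;> ring

theorem exampleGraph_coeff_eq_zero {ω : ℝ} {a : Fin 13 → ℂ}
    (ha : a ∈ exampleGraph.resCoeffs ω) :
    (Real.sin ω ≠ 0 → a 0 = 0 ∧ a 1 = 0 ∧ a 2 = 0 ∧ a 3 = 0 ∧ a 4 = 0 ∧ a 5 = 0) ∧
    (Real.sin (ω * √3) ≠ 0 →
      a 6 = 0 ∧ a 7 = 0 ∧ a 8 = 0 ∧ a 9 = 0 ∧ a 10 = 0 ∧ a 11 = 0) ∧
    (Real.sin (ω * (π / 2)) ≠ 0 → a 12 = 0) := by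
  have h (e : Fin 13) (he : Real.sin (ω * exampleGraph.L e) ≠ 0) : a e = 0 :=
    coeff_eq_zero_of_mem_resCoeffs ha he
  refine ⟨fun hs => ⟨?_, ?_, ?_, ?_, ?_, ?_⟩, fun hs => ⟨?_, ?_, ?_, ?_, ?_, ?_⟩,
    fun hs => ?_⟩ <;> exact h _ (by simpa [exampleGraph] using hs)

theorem exampleGraph_kirchhoff_iff (ω : ℝ) (a : Fin 13 → ℂ) :
    (∀ v, exampleGraph.sineKirchhoff ω a v = 0) ↔
      a 0 + a 1 + a 3 + a 4 = 0 ∧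
      a 0 * Real.cos ω = a 2 + a 6 + a 7 ∧
      (a 1 + a 2) * Real.cos ω = a 9 + a 10 ∧
      a 3 * Real.cos ω + a 6 * Real.cos (ω * √3) = a 5 + a 8 ∧
      (a 4 + a 5) * Real.cos ω + a 9 * Real.cos (ω * √3) = a 11 ∧
      (a 7 + a 8) * Real.cos (ω * √3) = a 12 ∧
      (a 10 + a 11) * Real.cos (ω * √3) = 0 ∧
      a 12 * Real.cos (ω * (π / 2)) = 0 := by
  change (∀ v : Fin 8, _) ↔ _
  simp only [exampleGraph_sineKirchhoff, Fin.forall_fin_succ, IsEmpty.forall_iff, and_true,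
    Matrix.cons_val_zero, Matrix.cons_val_succ, sub_eq_zero, neg_eq_zero]

theorem exampleGraph_resCoeffs_pi_div_sqrt_three : exampleGraph.resCoeffs (π / √3) = ⊥ := by
  refine eq_bot_iff.2 fun (a : Fin 13 → ℂ) ha => ?_
  have hunit_lt : π / √3 < π := div_lt_self Real.pi_pos one_lt_sqrt_three
  have hp_lt : π / √3 * (π / 2) < π :=
    calc π / √3 * (π / 2) = π * (π / (2 * √3)) := by ring
      _ < π * 1 := mul_lt_mul_of_pos_left
          ((div_lt_one (by positivity)).2 pi_lt_two_mul_sqrt_three) Real.pi_pos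
      _ = π := mul_one π
  have hc : (Real.cos (π / √3 * √3) : ℂ) = -1 := by
    rw [div_mul_cancel₀ π (by positivity), Real.cos_pi, Complex.ofReal_neg, Complex.ofReal_one]
  obtain ⟨hunit, -, hp⟩ := exampleGraph_coeff_eq_zero ha
  obtain ⟨h0, h1, h2, h3, h4, h5⟩ := hunit <| sin_ne_zero_of_mul_pi_lt_of_lt_add_one_mul_pi 0
    (by simp; positivity) (by simpa using hunit_lt)
  have h12 := hp <| sin_ne_zero_of_mul_pi_lt_of_lt_add_one_mul_pi 0 (by simp; positivity)
    (by simpa using hp_lt)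
  obtain ⟨-, k1, k2, k3, k4, k5, k6, -⟩ := (exampleGraph_kirchhoff_iff _ a).1 ha.2
  simp only [hc, h0, h1, h2, h3, h4, h5, h12, zero_mul, zero_add, add_zero, mul_neg,
    mul_one] at k1 k2 k3 k4 k5 k6
  have h6 : a 6 = 0 := by linear_combination (-k1 - k3 + k5) / 2
  have h7 : a 7 = 0 := by linear_combination (-k1 + k3 - k5) / 2
  have h8 : a 8 = 0 := by linear_combination (k1 - k3 - k5) / 2
  have h9 : a 9 = 0 := by linear_combination (-k2 - k4 + k6) / 2
  have h10 : a 10 = 0 := by linear_combination (-k2 + k4 - k6) / 2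
  have h11 : a 11 = 0 := by linear_combination (k2 - k4 - k6) / 2
  funext e
  fin_cases e <;> assumption

theorem exampleGraph_resCoeffs_two : exampleGraph.resCoeffs 2 = ⊥ := by
  refine eq_bot_iff.2 fun (a : Fin 13 → ℂ) ha => ?_
  have hc : (Real.cos (2 * (π / 2)) : ℂ) = -1 := by
    rw [mul_div_cancel₀ π two_ne_zero, Real.cos_pi, Complex.ofReal_neg, Complex.ofReal_one]
  obtain ⟨hunit, hsqrt3, -⟩ := exampleGraph_coeff_eq_zero ha
  obtain ⟨h0, h1, h2, h3, h4, h5⟩ := hunit <| sin_ne_zero_of_mul_pi_lt_of_lt_add_one_mul_pi 0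
    (by simp) (by simpa using Real.pi_gt_three.trans' (by norm_num))
  obtain ⟨h6, h7, h8, h9, h10, h11⟩ := hsqrt3 <| sin_ne_zero_of_mul_pi_lt_of_lt_add_one_mul_pi 1
    (by simpa using pi_lt_two_mul_sqrt_three)
    (by push_cast; linarith [sqrt_three_lt_two, Real.pi_gt_three])
  obtain ⟨-, -, -, -, -, -, -, k7⟩ := (exampleGraph_kirchhoff_iff _ a).1 ha.2
  have h12 : a 12 = 0 := by linear_combination -k7 + a 12 * hc
  funext e
  fin_cases e <;> assumption

theorem exampleGraph_resCoeffs_pi : exampleGraph.resCoeffs π =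
    Submodule.span ℂ {(![1, 1, -1, -1, -1, 1, 0, 0, 0, 0, 0, 0, 0] : Fin 13 → ℂ)} := by
  have hc : (Real.cos π : ℂ) = -1 := by rw [Real.cos_pi, Complex.ofReal_neg, Complex.ofReal_one]
  apply le_antisymm
  · intro (a : Fin 13 → ℂ) ha
    have hπ := Real.pi_gt_three
    have hπ' := Real.pi_lt_d2
    obtain ⟨-, hsqrt3, hp⟩ := exampleGraph_coeff_eq_zero ha
    obtain ⟨h6, h7, h8, h9, h10, h11⟩ := hsqrt3 <|
      sin_ne_zero_of_mul_pi_lt_of_lt_add_one_mul_pi 1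
        (by push_cast; nlinarith [one_lt_sqrt_three]) (by push_cast; nlinarith [sqrt_three_lt_two])
    have h12 := hp <| sin_ne_zero_of_mul_pi_lt_of_lt_add_one_mul_pi 1 (by push_cast; nlinarith)
      (by push_cast; nlinarith)
    obtain ⟨k0, k1, k2, k3, k4, -⟩ := (exampleGraph_kirchhoff_iff _ a).1 ha.2
    simp only [hc, h6, h7, h8, h9, h10, h11, zero_mul, add_zero, mul_neg, mul_one] at k1 k2 k3 k4
    have ha1 : a 1 = a 0 := by linear_combination k1 - k2
    have ha2 : a 2 = -a 0 := by linear_combination -k1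
    have ha5 : a 5 = a 0 := by linear_combination -(k0 + k3 + k4 - k1 + k2) / 2
    have ha3 : a 3 = -a 0 := by linear_combination -k3 - ha5
    have ha4 : a 4 = -a 0 := by linear_combination -k4 - ha5
    have : a 0 • (![1, 1, -1, -1, -1, 1, 0, 0, 0, 0, 0, 0, 0] : Fin 13 → ℂ) = a := by
      funext e
      fin_cases e <;> simp [ha1, ha2, ha3, ha4, ha5, h6, h7, h8, h9, h10, h11, h12]
    exact (Submodule.mem_span_singleton (M := exampleGraph.E → ℂ)).2 ⟨a 0, this⟩
  · refine Submodule.span_le.2 (Set.singleton_subset_iff.2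
      ⟨fun e => ?_, (exampleGraph_kirchhoff_iff _ _).2 ?_⟩)
    · fin_cases e <;> simp [exampleGraph]
    · simp [Matrix.cons_val]

theorem exampleGraph_resCoeffs_two_pi_div_sqrt_three : exampleGraph.resCoeffs (2 * π / √3) =
    Submodule.span ℂ (Set.range ![(![0, 0, 0, 0, 0, 0, 1, -1, 1, 0, 0, 0, 0] : Fin 13 → ℂ),
      ![0, 0, 0, 0, 0, 0, 0, 0, 0, 1, -1, 1, 0]]) := by
  have hω : 2 * π / √3 * √3 = 2 * π := div_mul_cancel₀ _ (by positivity)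
  apply le_antisymm
  · intro (a : Fin 13 → ℂ) ha
    have hunit₁ : π < 2 * π / √3 := by
      rw [lt_div_iff₀ (by positivity)]
      nlinarith [sqrt_three_lt_two, Real.pi_pos]
    have hunit₂ : 2 * π / √3 < 2 * π := div_lt_self (by positivity) one_lt_sqrt_three
    have hp_eq : 2 * π / √3 * (π / 2) = π * (π / √3) := by ring
    have hp₁ : π < 2 * π / √3 * (π / 2) := by
      rw [hp_eq]
      exact lt_mul_of_one_lt_right Real.pi_pos
        ((one_lt_div (by positivity)).2 (sqrt_three_lt_two.trans_le Real.two_le_pi))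
    have hp₂ : 2 * π / √3 * (π / 2) < 2 * π := by
      rw [hp_eq, mul_comm 2 π]
      exact mul_lt_mul_of_pos_left
        ((div_lt_iff₀ (by positivity)).2 pi_lt_two_mul_sqrt_three) Real.pi_pos
    have hc : (Real.cos (2 * π / √3 * √3) : ℂ) = 1 := by
      rw [hω, Real.cos_two_pi, Complex.ofReal_one]
    obtain ⟨hunit, -, hp⟩ := exampleGraph_coeff_eq_zero ha
    obtain ⟨h0, h1, h2, h3, h4, h5⟩ := hunit <| sin_ne_zero_of_mul_pi_lt_of_lt_add_one_mul_pi 1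
      (by push_cast; linarith) (by push_cast; linarith)
    have h12 := hp <| sin_ne_zero_of_mul_pi_lt_of_lt_add_one_mul_pi 1
      (by push_cast; linarith) (by push_cast; linarith)
    obtain ⟨-, k1, k2, k3, k4, -⟩ := (exampleGraph_kirchhoff_iff _ a).1 ha.2
    simp only [hc, h0, h1, h2, h3, h4, h5, zero_mul, zero_add, mul_one] at k1 k2 k3 k4
    have ha7 : a 7 = -a 6 := by linear_combination -k1
    have ha8 : a 8 = a 6 := by linear_combination -k3
    have ha10 : a 10 = -a 9 := by linear_combination -k2
    have ha11 : a 11 = a 9 := by linear_combination -k4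
    have : ∑ i, ![a 6, a 9] i • ![(![0, 0, 0, 0, 0, 0, 1, -1, 1, 0, 0, 0, 0] : Fin 13 → ℂ),
        ![0, 0, 0, 0, 0, 0, 0, 0, 0, 1, -1, 1, 0]] i = a := by
      funext e
      fin_cases e <;> simp [h0, h1, h2, h3, h4, h5, ha7, ha8, ha10, ha11, h12]
    exact (Submodule.mem_span_range_iff_exists_fun (M := exampleGraph.E → ℂ) ℂ).2 ⟨_, this⟩
  · refine Submodule.span_le.2 (Set.range_subset_iff.2 fun i =>
      ⟨fun e => ?_, (exampleGraph_kirchhoff_iff _ _).2 ?_⟩)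
    · fin_cases i <;> fin_cases e <;> simp [exampleGraph, hω]
    · fin_cases i <;> simp [hω, Matrix.cons_val]

theorem exampleGraph_finrank_resCoeffs_pi : Module.finrank ℂ (exampleGraph.resCoeffs π) = 1 := by
  have hv : (![1, 1, -1, -1, -1, 1, 0, 0, 0, 0, 0, 0, 0] : Fin 13 → ℂ) ≠ 0 :=
    fun h => by simpa using congrFun h 0
  rw [exampleGraph_resCoeffs_pi]
  exact finrank_span_singleton hv

theorem exampleGraph_finrank_resCoeffs_two_pi_div_sqrt_three :
    Module.finrank ℂ (exampleGraph.resCoeffs (2 * π / √3)) = 2 := by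
  have hli : LinearIndependent ℂ ![(![0, 0, 0, 0, 0, 0, 1, -1, 1, 0, 0, 0, 0] : Fin 13 → ℂ),
      ![0, 0, 0, 0, 0, 0, 0, 0, 0, 1, -1, 1, 0]] :=
    LinearIndependent.pair_iff.2 fun s t hst =>
      ⟨by simpa using congrFun hst 6, by simpa using congrFun hst 9⟩
  have hdim := (finrank_span_eq_card hli).trans (Fintype.card_fin 2)
  rw [exampleGraph_resCoeffs_two_pi_div_sqrt_three]
  exact hdim

/-- Example `ex:example2`: for the graph of Figure `fig:Hantel1`,
(i) `dim R(G, π²/3) = 0` (no resonance), (ii) `dim R(G, 4) = 0` (no resonance),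
(iii) `dim R(G, π²) = 1` (resonance), (iv) `dim R(G, 4π²/3) = 2` (resonance). -/
theorem statement_19 :
    (exampleGraph.dimRes (π ^ 2 / 3) = 0 ∧ ¬ exampleGraph.IsResonance (π ^ 2 / 3)) ∧
    (exampleGraph.dimRes 4 = 0 ∧ ¬ exampleGraph.IsResonance 4) ∧
    (exampleGraph.dimRes (π ^ 2) = 1 ∧ exampleGraph.IsResonance (π ^ 2)) ∧
    (exampleGraph.dimRes (4 * π ^ 2 / 3) = 2 ∧ exampleGraph.IsResonance (4 * π ^ 2 / 3)) := by
  have hsqrt3 : √3 ^ 2 = 3 := Real.sq_sqrt (by norm_num)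
  have h₁ : π / √3 ≠ 0 := by positivity
  have h₄ : 2 * π / √3 ≠ 0 := by positivity
  rw [show π ^ 2 / 3 = (π / √3) ^ 2 by rw [div_pow, hsqrt3],
    show 4 * π ^ 2 / 3 = (2 * π / √3) ^ 2 by rw [div_pow, mul_pow, hsqrt3]; norm_num,
    show (4 : ℝ) = 2 ^ 2 by norm_num]
  rw [isResonance_sq_iff_dimRes_pos h₁, isResonance_sq_iff_dimRes_pos two_ne_zero,
    isResonance_sq_iff_dimRes_pos Real.pi_ne_zero, isResonance_sq_iff_dimRes_pos h₄,
    dimRes_sq h₁, dimRes_sq two_ne_zero, dimRes_sq Real.pi_ne_zero, dimRes_sq h₄,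
    exampleGraph_resCoeffs_pi_div_sqrt_three, exampleGraph_resCoeffs_two,
    exampleGraph_finrank_resCoeffs_pi, exampleGraph_finrank_resCoeffs_two_pi_div_sqrt_three]
  simp
end
end
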